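/- Generalized (dynamical) Yang–Baxter equation (Proposition 1, eq. (2.27)): In A ⊗ A ⊗ A ⊗ V, for R̂ equal to either R̂₊ or R̂₋, one has R̂₁₂ · (Φ₂ · R̂₁₃ · Φ₂⁻¹) · R̂₂₃ = (Φ₁ · R̂₂₃ · Φ₁⁻¹) · R̂₁₃ · (Φ₃ · R̂₁₂ · Φ₃⁻¹), where for X ∈ A ⊗ A ⊗ V, X_{ij} denotes X with its two A-legs placed in tensor positions i, j and its V-leg in position 4, and Φ_k denotes Φ with its A-leg in position k and its V-leg in position 4. -/

import Mathlib

open scoped TensorProduct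

noncomputable section

namespace Stmt4

variable (A V : Type*) [Ring A] [Bialgebra ℂ A] [Ring V] [Algebra ℂ V]

/-- Map units along a `ℂ`-algebra homomorphism. -/
def uMap {X Y : Type*} [Semiring X] [Semiring Y] [Algebra ℂ X] [Algebra ℂ Y] (f : X →ₐ[ℂ] Y) :
    Xˣ →* Yˣ :=
  Units.map (f : X →* Y)

/-- Embedding of `A ⊗ A` into `A ⊗ A ⊗ A` with legs in positions 1 and 2. -/
def a12 : A ⊗[ℂ] A →ₐ[ℂ] A ⊗[ℂ] (A ⊗[ℂ] A) :=
  Algebra.TensorProduct.map (AlgHom.id ℂ A) Algebra.TensorProduct.includeLeft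

/-- Embedding of `A ⊗ A` into `A ⊗ A ⊗ A` with legs in positions 1 and 3. -/
def a13 : A ⊗[ℂ] A →ₐ[ℂ] A ⊗[ℂ] (A ⊗[ℂ] A) :=
  Algebra.TensorProduct.map (AlgHom.id ℂ A) Algebra.TensorProduct.includeRight

/-- Embedding of `A ⊗ A` into `A ⊗ A ⊗ A` with legs in positions 2 and 3. -/
def a23 : A ⊗[ℂ] A →ₐ[ℂ] A ⊗[ℂ] (A ⊗[ℂ] A) :=
  Algebra.TensorProduct.includeRight

/-- `Δ ⊗ id_A : A ⊗ A → A ⊗ A ⊗ A`. -/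
def deltaIdA : A ⊗[ℂ] A →ₐ[ℂ] A ⊗[ℂ] (A ⊗[ℂ] A) :=
  (Algebra.TensorProduct.assoc ℂ ℂ ℂ A A A).toAlgHom.comp
    (Algebra.TensorProduct.map (Bialgebra.comulAlgHom ℂ A) (AlgHom.id ℂ A))

/-- `id_A ⊗ Δ : A ⊗ A → A ⊗ A ⊗ A`. -/
def idDeltaA : A ⊗[ℂ] A →ₐ[ℂ] A ⊗[ℂ] (A ⊗[ℂ] A) :=
  Algebra.TensorProduct.map (AlgHom.id ℂ A) (Bialgebra.comulAlgHom ℂ A)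

/-- Embedding of `A ⊗ V` into `A ⊗ A ⊗ V` with legs in positions 1 and 3. -/
def leg13 : A ⊗[ℂ] V →ₐ[ℂ] A ⊗[ℂ] (A ⊗[ℂ] V) :=
  Algebra.TensorProduct.map (AlgHom.id ℂ A) Algebra.TensorProduct.includeRight

/-- Embedding of `A ⊗ V` into `A ⊗ A ⊗ V` with legs in positions 2 and 3. -/
def leg23 : A ⊗[ℂ] V →ₐ[ℂ] A ⊗[ℂ] (A ⊗[ℂ] V) :=
  Algebra.TensorProduct.includeRight

/-- Embedding of `A ⊗ A` into `A ⊗ A ⊗ V` with legs in positions 1 and 2,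
i.e. `X ↦ X ⊗ 1_V`. -/
def leg12 : A ⊗[ℂ] A →ₐ[ℂ] A ⊗[ℂ] (A ⊗[ℂ] V) :=
  Algebra.TensorProduct.map (AlgHom.id ℂ A) Algebra.TensorProduct.includeLeft

/-- `Δ ⊗ id_V : A ⊗ V → A ⊗ A ⊗ V`. -/
def deltaId : A ⊗[ℂ] V →ₐ[ℂ] A ⊗[ℂ] (A ⊗[ℂ] V) :=
  (Algebra.TensorProduct.assoc ℂ ℂ ℂ A A V).toAlgHom.comp
    (Algebra.TensorProduct.map (Bialgebra.comulAlgHom ℂ A) (AlgHom.id ℂ V))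

/-- The fusion element `F = Φ₂ · Φ₁ · ((Δ ⊗ id_V)(Φ))⁻¹ ∈ A ⊗ A ⊗ V`. -/
def fusion (Φ : (A ⊗[ℂ] V)ˣ) : (A ⊗[ℂ] (A ⊗[ℂ] V))ˣ :=
  uMap (leg23 A V) Φ * uMap (leg13 A V) Φ * (uMap (deltaId A V) Φ)⁻¹

/-- The flip automorphism `τ₁₂` of `A ⊗ A ⊗ V` exchanging the two `A`-factors. -/
def tau12 : (A ⊗[ℂ] (A ⊗[ℂ] V)) ≃ₐ[ℂ] (A ⊗[ℂ] (A ⊗[ℂ] V)) :=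
  (Algebra.TensorProduct.assoc ℂ ℂ ℂ A A V).symm.trans
    ((Algebra.TensorProduct.congr (Algebra.TensorProduct.comm ℂ A A) AlgEquiv.refl).trans
      (Algebra.TensorProduct.assoc ℂ ℂ ℂ A A V))

/-- The braiding element `R̂₊ = τ₁₂(F) · (R ⊗ 1_V) · F⁻¹`. -/
def rrPlus (R : (A ⊗[ℂ] A)ˣ) (Φ : (A ⊗[ℂ] V)ˣ) : (A ⊗[ℂ] (A ⊗[ℂ] V))ˣ :=
  uMap (tau12 A V).toAlgHom (fusion A V Φ) * uMap (leg12 A V) R * (fusion A V Φ)⁻¹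

/-- The braiding element `R̂₋ = τ₁₂(F) · (τ(R)⁻¹ ⊗ 1_V) · F⁻¹`. -/
def rrMinus (R : (A ⊗[ℂ] A)ˣ) (Φ : (A ⊗[ℂ] V)ˣ) : (A ⊗[ℂ] (A ⊗[ℂ] V))ˣ :=
  uMap (tau12 A V).toAlgHom (fusion A V Φ) *
    uMap (leg12 A V) ((uMap (Algebra.TensorProduct.comm ℂ A A).toAlgHom R)⁻¹) *
    (fusion A V Φ)⁻¹

set_option maxHeartbeats 1600000 in
/-- Embedding `A ⊗ A ⊗ V → A ⊗ A ⊗ A ⊗ V`, `A`-legs to positions 1, 2, `V`-leg to position 4. -/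
def j12 : A ⊗[ℂ] (A ⊗[ℂ] V) →ₐ[ℂ] A ⊗[ℂ] (A ⊗[ℂ] (A ⊗[ℂ] V)) :=
  Algebra.TensorProduct.map (AlgHom.id ℂ A)
    (Algebra.TensorProduct.map (AlgHom.id ℂ A) Algebra.TensorProduct.includeRight)

/-- Embedding `A ⊗ A ⊗ V → A ⊗ A ⊗ A ⊗ V`, `A`-legs to positions 1, 3, `V`-leg to position 4. -/
def j13 : A ⊗[ℂ] (A ⊗[ℂ] V) →ₐ[ℂ] A ⊗[ℂ] (A ⊗[ℂ] (A ⊗[ℂ] V)) :=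
  Algebra.TensorProduct.map (AlgHom.id ℂ A) Algebra.TensorProduct.includeRight

/-- Embedding `A ⊗ A ⊗ V → A ⊗ A ⊗ A ⊗ V`, `A`-legs to positions 2, 3, `V`-leg to position 4. -/
def j23 : A ⊗[ℂ] (A ⊗[ℂ] V) →ₐ[ℂ] A ⊗[ℂ] (A ⊗[ℂ] (A ⊗[ℂ] V)) :=
  Algebra.TensorProduct.includeRight

/-- Embedding `A ⊗ V → A ⊗ A ⊗ A ⊗ V`, `A`-leg to position 1, `V`-leg to position 4. -/
def k1 : A ⊗[ℂ] V →ₐ[ℂ] A ⊗[ℂ] (A ⊗[ℂ] (A ⊗[ℂ] V)) :=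
  Algebra.TensorProduct.map (AlgHom.id ℂ A)
    (AlgHom.comp Algebra.TensorProduct.includeRight Algebra.TensorProduct.includeRight)

/-- Embedding `A ⊗ V → A ⊗ A ⊗ A ⊗ V`, `A`-leg to position 2, `V`-leg to position 4. -/
def k2 : A ⊗[ℂ] V →ₐ[ℂ] A ⊗[ℂ] (A ⊗[ℂ] (A ⊗[ℂ] V)) :=
  AlgHom.comp Algebra.TensorProduct.includeRight (leg13 A V)

/-- Embedding `A ⊗ V → A ⊗ A ⊗ A ⊗ V`, `A`-leg to position 3, `V`-leg to position 4. -/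
def k3 : A ⊗[ℂ] V →ₐ[ℂ] A ⊗[ℂ] (A ⊗[ℂ] (A ⊗[ℂ] V)) :=
  AlgHom.comp Algebra.TensorProduct.includeRight Algebra.TensorProduct.includeRight


section Lemmas

open Algebra.TensorProduct

variable {A V}

lemma uMap_val {X Y : Type*} [Semiring X] [Semiring Y] [Algebra ℂ X] [Algebra ℂ Y]
    (f : X →ₐ[ℂ] Y) (u : Xˣ) : ((uMap f u : Yˣ) : Y) = f (u : X) := rfl

lemma uMap_comp {X Y Z : Type*} [Semiring X] [Semiring Y] [Semiring Z]
    [Algebra ℂ X] [Algebra ℂ Y] [Algebra ℂ Z] (f : Y →ₐ[ℂ] Z) (g : X →ₐ[ℂ] Y) (u : Xˣ) :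
    uMap f (uMap g u) = uMap (f.comp g) u := by
  ext; rfl

lemma uMap_congr {X Y : Type*} [Semiring X] [Semiring Y] [Algebra ℂ X] [Algebra ℂ Y]
    {f g : X →ₐ[ℂ] Y} (h : f = g) (u : Xˣ) : uMap f u = uMap g u := by subst h; rfl

-- `assoc` on `c ⊗ v` with `c : A ⊗ A`
lemma assoc_left (c : A ⊗[ℂ] A) (v : V) :
    (Algebra.TensorProduct.assoc ℂ ℂ ℂ A A V) (c ⊗ₜ[ℂ] v)
      = leg12 A V c * (1 ⊗ₜ[ℂ] ((1 : A) ⊗ₜ[ℂ] v)) := by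
  induction c using TensorProduct.induction_on with
  | zero => simp [TensorProduct.zero_tmul]
  | tmul x y => simp [leg12, Algebra.TensorProduct.tmul_mul_tmul]
  | add x y hx hy => simp [TensorProduct.add_tmul, hx, hy, add_mul]

lemma deltaId_tmul (a : A) (v : V) :
    deltaId A V (a ⊗ₜ[ℂ] v)
      = leg12 A V (Bialgebra.comulAlgHom ℂ A a) * (1 ⊗ₜ[ℂ] ((1 : A) ⊗ₜ[ℂ] v)) := by
  rw [deltaId]
  simp only [AlgHom.coe_comp, AlgEquiv.toAlgHom_eq_coe, AlgHom.coe_coe, Function.comp_apply,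
    Algebra.TensorProduct.map_tmul, AlgHom.coe_id, id_eq]
  exact assoc_left _ _

end Lemmas
section Lemmas2
open Algebra.TensorProduct
variable {A V}

lemma leg12_commute_one (c : A ⊗[ℂ] A) (v : V) :
    Commute (leg12 A V c) ((1 : A) ⊗ₜ[ℂ] ((1 : A) ⊗ₜ[ℂ] v)) := by
  induction c using TensorProduct.induction_on with
  | zero => simp [Commute, SemiconjBy]
  | tmul x y =>
      simp [leg12, Commute, SemiconjBy, Algebra.TensorProduct.tmul_mul_tmul]
  | add x y hx hy =>
      simpa [map_add, add_mul, mul_add] using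
        Commute.add_left hx hy

lemma tau12_one_one (v : V) :
    tau12 A V ((1 : A) ⊗ₜ[ℂ] ((1 : A) ⊗ₜ[ℂ] v)) = (1 : A) ⊗ₜ[ℂ] ((1 : A) ⊗ₜ[ℂ] v) := by
  simp [tau12, Algebra.TensorProduct.assoc_symm_tmul, Algebra.TensorProduct.assoc_tmul,
    Algebra.TensorProduct.congr_apply, Algebra.TensorProduct.comm_tmul]

lemma tau12_leg12 (c : A ⊗[ℂ] A) :
    tau12 A V (leg12 A V c) = leg12 A V (Algebra.TensorProduct.comm ℂ A A c) := by
  induction c using TensorProduct.induction_on with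
  | zero => simp
  | tmul x y => simp [tau12, leg12, Algebra.TensorProduct.assoc_symm_tmul,
      Algebra.TensorProduct.assoc_tmul, Algebra.TensorProduct.congr_apply,
      Algebra.TensorProduct.comm_tmul]
  | add x y hx hy => simp [map_add, hx, hy]

lemma tau12_comp_leg13 : (tau12 A V).toAlgHom.comp (leg13 A V) = leg23 A V := by
  apply Algebra.TensorProduct.ext' (fun a v => ?_)
  simp [tau12, leg13, leg23, Algebra.TensorProduct.assoc_symm_tmul,
    Algebra.TensorProduct.assoc_tmul, Algebra.TensorProduct.congr_apply,
    Algebra.TensorProduct.comm_tmul, Algebra.TensorProduct.includeRight_apply]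

lemma tau12_comp_leg23 : (tau12 A V).toAlgHom.comp (leg23 A V) = leg13 A V := by
  apply Algebra.TensorProduct.ext' (fun a v => ?_)
  simp [tau12, leg13, leg23, Algebra.TensorProduct.assoc_symm_tmul,
    Algebra.TensorProduct.assoc_tmul, Algebra.TensorProduct.congr_apply,
    Algebra.TensorProduct.comm_tmul, Algebra.TensorProduct.includeRight_apply]

end Lemmas2
section Lemmas3
open Algebra.TensorProduct
variable {A V}

lemma leg12_intertwine (z : A ⊗[ℂ] A)
    (hz : ∀ a : A, z * Bialgebra.comulAlgHom ℂ A a =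
      Algebra.TensorProduct.comm ℂ A A (Bialgebra.comulAlgHom ℂ A a) * z)
    (x : A ⊗[ℂ] V) :
    leg12 A V z * deltaId A V x = tau12 A V (deltaId A V x) * leg12 A V z := by
  induction x using TensorProduct.induction_on with
  | zero => simp
  | tmul a v =>
      rw [deltaId_tmul, map_mul, tau12_leg12, tau12_one_one,
        ← mul_assoc, ← map_mul, hz, map_mul]
      rw [mul_assoc, mul_assoc, (leg12_commute_one z v).eq]
  | add x y hx hy => simp [map_add, mul_add, add_mul, hx, hy]

end Lemmas3
section Lemmas4
open Algebra.TensorProduct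
variable {A V}

lemma grp_conj {G : Type*} [Group G] (p1 p2 d d' ρ : G) (h : ρ * d = d' * ρ) :
    (p1 * p2 * d'⁻¹) * ρ * (p2 * p1 * d⁻¹)⁻¹ = p1 * p2 * ρ * p1⁻¹ * p2⁻¹ := by
  have h2 : d'⁻¹ * ρ * d = ρ := by
    rw [show d'⁻¹ * ρ * d = d'⁻¹ * (ρ * d) by group, h]; group
  calc (p1 * p2 * d'⁻¹) * ρ * (p2 * p1 * d⁻¹)⁻¹
      = p1 * p2 * (d'⁻¹ * ρ * d) * p1⁻¹ * p2⁻¹ := by group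
    _ = p1 * p2 * ρ * p1⁻¹ * p2⁻¹ := by rw [h2]

/-- Normal form of the conjugated R-matrix. -/
lemma rhat_normal (Φ : (A ⊗[ℂ] V)ˣ) (u : (A ⊗[ℂ] A)ˣ)
    (hu : ∀ a : A, (u : A ⊗[ℂ] A) * Bialgebra.comulAlgHom ℂ A a =
      Algebra.TensorProduct.comm ℂ A A (Bialgebra.comulAlgHom ℂ A a) * u) :
    uMap (tau12 A V).toAlgHom (fusion A V Φ) * uMap (leg12 A V) u * (fusion A V Φ)⁻¹
      = uMap (leg13 A V) Φ * uMap (leg23 A V) Φ * uMap (leg12 A V) u *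
        (uMap (leg13 A V) Φ)⁻¹ * (uMap (leg23 A V) Φ)⁻¹ := by
  set P1 := uMap (leg13 A V) Φ
  set P2 := uMap (leg23 A V) Φ
  set d := uMap (deltaId A V) Φ
  set d' := uMap ((tau12 A V).toAlgHom.comp (deltaId A V)) Φ
  set ρ := uMap (leg12 A V) u
  have hf : uMap (tau12 A V).toAlgHom (fusion A V Φ) = P1 * P2 * d'⁻¹ := by
    rw [fusion, map_mul, map_mul, map_inv, uMap_comp, uMap_comp, uMap_comp,
      uMap_congr tau12_comp_leg23, uMap_congr tau12_comp_leg13]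
  have hc : ρ * d = d' * ρ := by
    ext
    simpa [P1, P2, d, d', ρ, uMap_val] using leg12_intertwine (u : A ⊗[ℂ] A) hu (Φ : A ⊗[ℂ] V)
  rw [hf, fusion]
  exact grp_conj P1 P2 d d' ρ hc

end Lemmas4
section Lemmas5
open Algebra.TensorProduct
variable {A V}

lemma ext3 {W' : Type*} [Semiring W'] [Algebra ℂ W']
    (f g : A ⊗[ℂ] (A ⊗[ℂ] V) →ₐ[ℂ] W')
    (h : ∀ (a b : A) (v : V), f (a ⊗ₜ (b ⊗ₜ v)) = g (a ⊗ₜ (b ⊗ₜ v))) : f = g := by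
  refine Algebra.TensorProduct.ext' (fun a y => ?_)
  induction y using TensorProduct.induction_on with
  | zero => simp [TensorProduct.tmul_zero]
  | tmul b v => exact h a b v
  | add x y hx hy => rw [TensorProduct.tmul_add, map_add, map_add, hx, hy]

/-- Embedding `A ⊗ A ⊗ A → A ⊗ A ⊗ A ⊗ V` with `1` in the `V`-leg. -/
def embW : A ⊗[ℂ] (A ⊗[ℂ] A) →ₐ[ℂ] A ⊗[ℂ] (A ⊗[ℂ] (A ⊗[ℂ] V)) :=
  Algebra.TensorProduct.map (AlgHom.id ℂ A)
    (Algebra.TensorProduct.map (AlgHom.id ℂ A) Algebra.TensorProduct.includeLeft)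

lemma j12_leg13 : (j12 A V).comp (leg13 A V) = k1 A V := by
  refine Algebra.TensorProduct.ext' (fun a v => ?_)
  simp [j12, leg13, k1, Algebra.TensorProduct.includeRight_apply]

lemma j12_leg23 : (j12 A V).comp (leg23 A V) = k2 A V := by
  refine Algebra.TensorProduct.ext' (fun a v => ?_)
  simp [j12, leg23, leg13, k2, Algebra.TensorProduct.includeRight_apply]

lemma j13_leg13 : (j13 A V).comp (leg13 A V) = k1 A V := by
  refine Algebra.TensorProduct.ext' (fun a v => ?_)
  simp [j13, leg13, k1, Algebra.TensorProduct.includeRight_apply]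

lemma j13_leg23 : (j13 A V).comp (leg23 A V) = k3 A V := by
  refine Algebra.TensorProduct.ext' (fun a v => ?_)
  simp [j13, leg13, leg23, k3, Algebra.TensorProduct.includeRight_apply]

lemma j23_leg13 : (j23 A V).comp (leg13 A V) = k2 A V := by
  refine Algebra.TensorProduct.ext' (fun a v => ?_)
  simp [j23, leg13, k2, Algebra.TensorProduct.includeRight_apply]

lemma j23_leg23 : (j23 A V).comp (leg23 A V) = k3 A V := by
  refine Algebra.TensorProduct.ext' (fun a v => ?_)
  simp [j23, leg23, k3, Algebra.TensorProduct.includeRight_apply]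

lemma j12_leg12 : (j12 A V).comp (leg12 A V) = (embW (A := A) (V := V)).comp (a12 A) := by
  refine Algebra.TensorProduct.ext' (fun a b => ?_)
  simp [j12, leg12, a12, embW, Algebra.TensorProduct.includeRight_apply,
    Algebra.TensorProduct.includeLeft_apply]

lemma j13_leg12 : (j13 A V).comp (leg12 A V) = (embW (A := A) (V := V)).comp (a13 A) := by
  refine Algebra.TensorProduct.ext' (fun a b => ?_)
  simp [j13, leg12, a13, embW, Algebra.TensorProduct.includeRight_apply,
    Algebra.TensorProduct.includeLeft_apply]

lemma j23_leg12 : (j23 A V).comp (leg12 A V) = (embW (A := A) (V := V)).comp (a23 A) := by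
  refine Algebra.TensorProduct.ext' (fun a b => ?_)
  simp [j23, leg12, a23, embW, Algebra.TensorProduct.includeRight_apply,
    Algebra.TensorProduct.includeLeft_apply]

end Lemmas5
section Lemmas6
open Algebra.TensorProduct
variable {A V}

lemma commute_tensor_left {X1 X2 W' : Type*} [Semiring X1] [Semiring X2] [Semiring W']
    [Algebra ℂ X1] [Algebra ℂ X2] [Algebra ℂ W']
    (f : X1 ⊗[ℂ] X2 →ₐ[ℂ] W') (w : W') (h : ∀ p q, Commute (f (p ⊗ₜ q)) w) (x : X1 ⊗[ℂ] X2) :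
    Commute (f x) w := by
  induction x using TensorProduct.induction_on with
  | zero => simp [Commute, SemiconjBy]
  | tmul p q => exact h p q
  | add x y hx hy => rw [map_add]; exact hx.add_left hy

lemma comm_12_3 (x : A ⊗[ℂ] A) (y : A ⊗[ℂ] V) :
    Commute (embW (A := A) (V := V) (a12 A x)) (k3 A V y) := by
  refine commute_tensor_left ((embW (A := A) (V := V)).comp (a12 A)) _ (fun p q => ?_) x
  refine (commute_tensor_left (k3 A V) _ (fun c v => ?_) y).symm
  simp [Commute, SemiconjBy, embW, a12, k3, leg13, Algebra.TensorProduct.tmul_mul_tmul,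
    Algebra.TensorProduct.includeRight_apply, Algebra.TensorProduct.includeLeft_apply]

lemma comm_13_2 (x : A ⊗[ℂ] A) (y : A ⊗[ℂ] V) :
    Commute (embW (A := A) (V := V) (a13 A x)) (k2 A V y) := by
  refine commute_tensor_left ((embW (A := A) (V := V)).comp (a13 A)) _ (fun p q => ?_) x
  refine (commute_tensor_left (k2 A V) _ (fun c v => ?_) y).symm
  simp [Commute, SemiconjBy, embW, a13, k2, leg13, Algebra.TensorProduct.tmul_mul_tmul,
    Algebra.TensorProduct.includeRight_apply, Algebra.TensorProduct.includeLeft_apply]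

lemma comm_23_1 (x : A ⊗[ℂ] A) (y : A ⊗[ℂ] V) :
    Commute (embW (A := A) (V := V) (a23 A x)) (k1 A V y) := by
  refine commute_tensor_left ((embW (A := A) (V := V)).comp (a23 A)) _ (fun p q => ?_) x
  refine (commute_tensor_left (k1 A V) _ (fun c v => ?_) y).symm
  simp [Commute, SemiconjBy, embW, a23, k1, leg13, Algebra.TensorProduct.tmul_mul_tmul,
    Algebra.TensorProduct.includeRight_apply, Algebra.TensorProduct.includeLeft_apply]

end Lemmas6
section Lemmas7
open Algebra.TensorProduct
variable {A}

lemma a12_eq : a12 A = leg12 A A := rfl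
lemma a13_eq : a13 A = leg13 A A := rfl
lemma a23_eq : a23 A = leg23 A A := rfl
lemma deltaIdA_eq : deltaIdA A = deltaId A A := rfl

/-- The Yang–Baxter equation in `A ⊗ A ⊗ A`. -/
lemma ybe (R : (A ⊗[ℂ] A)ˣ)
    (hR : ∀ a : A, (R : A ⊗[ℂ] A) * Bialgebra.comulAlgHom ℂ A a =
      Algebra.TensorProduct.comm ℂ A A (Bialgebra.comulAlgHom ℂ A a) * R)
    (hR1 : deltaIdA A (R : A ⊗[ℂ] A) = a13 A (R : A ⊗[ℂ] A) * a23 A (R : A ⊗[ℂ] A)) :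
    uMap (a12 A) R * uMap (a13 A) R * uMap (a23 A) R =
      uMap (a23 A) R * uMap (a13 A) R * uMap (a12 A) R := by
  ext
  push_cast [uMap_val]
  set r := (R : A ⊗[ℂ] A)
  have h1 : a12 A r * (a13 A r * a23 A r) = tau12 A A (deltaIdA A r) * a12 A r := by
    rw [← hR1, deltaIdA_eq, a12_eq]
    exact leg12_intertwine r hR r
  have h2 : tau12 A A (deltaIdA A r) = a23 A r * a13 A r := by
    rw [hR1, map_mul]
    rw [a13_eq, a23_eq]
    rw [show tau12 A A (leg13 A A r) = leg23 A A r from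
      congrFun (congrArg DFunLike.coe tau12_comp_leg13) r]
    rw [show tau12 A A (leg23 A A r) = leg13 A A r from
      congrFun (congrArg DFunLike.coe tau12_comp_leg23) r]
  calc a12 A r * a13 A r * a23 A r = a12 A r * (a13 A r * a23 A r) := by rw [mul_assoc]
    _ = tau12 A A (deltaIdA A r) * a12 A r := h1
    _ = a23 A r * a13 A r * a12 A r := by rw [h2]

/-- Flip of the outer legs of `A ⊗ A ⊗ A`. -/
def s13 : (A ⊗[ℂ] (A ⊗[ℂ] A)) ≃ₐ[ℂ] (A ⊗[ℂ] (A ⊗[ℂ] A)) :=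
  (tau12 A A).trans ((Algebra.TensorProduct.congr AlgEquiv.refl
    (Algebra.TensorProduct.comm ℂ A A)).trans (tau12 A A))

lemma s13_a12 : (s13 (A := A)).toAlgHom.comp (a12 A) =
    (a23 A).comp (Algebra.TensorProduct.comm ℂ A A).toAlgHom := by
  refine Algebra.TensorProduct.ext' (fun a b => ?_)
  simp [s13, tau12, a12, a23, Algebra.TensorProduct.assoc_symm_tmul,
    Algebra.TensorProduct.assoc_tmul, Algebra.TensorProduct.congr_apply,
    Algebra.TensorProduct.comm_tmul, Algebra.TensorProduct.includeRight_apply,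
    Algebra.TensorProduct.includeLeft_apply]

lemma s13_a13 : (s13 (A := A)).toAlgHom.comp (a13 A) =
    (a13 A).comp (Algebra.TensorProduct.comm ℂ A A).toAlgHom := by
  refine Algebra.TensorProduct.ext' (fun a b => ?_)
  simp [s13, tau12, a13, Algebra.TensorProduct.assoc_symm_tmul,
    Algebra.TensorProduct.assoc_tmul, Algebra.TensorProduct.congr_apply,
    Algebra.TensorProduct.comm_tmul, Algebra.TensorProduct.includeRight_apply]

lemma s13_a23 : (s13 (A := A)).toAlgHom.comp (a23 A) =
    (a12 A).comp (Algebra.TensorProduct.comm ℂ A A).toAlgHom := by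
  refine Algebra.TensorProduct.ext' (fun a b => ?_)
  simp [s13, tau12, a12, a23, Algebra.TensorProduct.assoc_symm_tmul,
    Algebra.TensorProduct.assoc_tmul, Algebra.TensorProduct.congr_apply,
    Algebra.TensorProduct.comm_tmul, Algebra.TensorProduct.includeRight_apply,
    Algebra.TensorProduct.includeLeft_apply]

/-- The flipped Yang–Baxter equation. -/
lemma ybe' (R : (A ⊗[ℂ] A)ˣ)
    (hR : ∀ a : A, (R : A ⊗[ℂ] A) * Bialgebra.comulAlgHom ℂ A a =
      Algebra.TensorProduct.comm ℂ A A (Bialgebra.comulAlgHom ℂ A a) * R)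
    (hR1 : deltaIdA A (R : A ⊗[ℂ] A) = a13 A (R : A ⊗[ℂ] A) * a23 A (R : A ⊗[ℂ] A)) :
    uMap ((a23 A).comp (Algebra.TensorProduct.comm ℂ A A).toAlgHom) R *
      uMap ((a13 A).comp (Algebra.TensorProduct.comm ℂ A A).toAlgHom) R *
      uMap ((a12 A).comp (Algebra.TensorProduct.comm ℂ A A).toAlgHom) R =
    uMap ((a12 A).comp (Algebra.TensorProduct.comm ℂ A A).toAlgHom) R *
      uMap ((a13 A).comp (Algebra.TensorProduct.comm ℂ A A).toAlgHom) R *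
      uMap ((a23 A).comp (Algebra.TensorProduct.comm ℂ A A).toAlgHom) R := by
  have h := congrArg (uMap (s13 (A := A)).toAlgHom) (ybe R hR hR1)
  simpa only [map_mul, uMap_comp, uMap_congr (s13_a12 (A := A)),
    uMap_congr (s13_a13 (A := A)), uMap_congr (s13_a23 (A := A))] using h

end Lemmas7
section Lemmas8
open Algebra.TensorProduct
variable {A V}

lemma grp_gybe {G : Type*} [Group G] (k1 k2 k3 r12 r13 r23 : G)
    (h3 : Commute r12 k3) (h1 : Commute r23 k1) (h2 : Commute r13 k2)
    (y : r12 * r13 * r23 = r23 * r13 * r12) :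
    (k1 * k2 * r12 * k1⁻¹ * k2⁻¹) * (k2 * (k1 * k3 * r13 * k1⁻¹ * k3⁻¹) * k2⁻¹) *
        (k2 * k3 * r23 * k2⁻¹ * k3⁻¹) =
      (k1 * (k2 * k3 * r23 * k2⁻¹ * k3⁻¹) * k1⁻¹) * (k1 * k3 * r13 * k1⁻¹ * k3⁻¹) *
        (k3 * (k1 * k2 * r12 * k1⁻¹ * k2⁻¹) * k3⁻¹) := by
  have c3 : r12 * k3 = k3 * r12 := h3.eq
  have c1 : k1⁻¹ * r23 = r23 * k1⁻¹ := h1.inv_right.symm.eq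
  have c2 : k2⁻¹ * r13 = r13 * k2⁻¹ := h2.inv_right.symm.eq
  calc (k1 * k2 * r12 * k1⁻¹ * k2⁻¹) * (k2 * (k1 * k3 * r13 * k1⁻¹ * k3⁻¹) * k2⁻¹) *
        (k2 * k3 * r23 * k2⁻¹ * k3⁻¹)
      = k1 * k2 * ((r12 * k3) * r13 * (k1⁻¹ * r23)) * k2⁻¹ * k3⁻¹ := by group
    _ = k1 * k2 * ((k3 * r12) * r13 * (r23 * k1⁻¹)) * k2⁻¹ * k3⁻¹ := by rw [c3, c1]
    _ = k1 * k2 * k3 * (r12 * r13 * r23) * k1⁻¹ * k2⁻¹ * k3⁻¹ := by group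
    _ = k1 * k2 * k3 * (r23 * r13 * r12) * k1⁻¹ * k2⁻¹ * k3⁻¹ := by rw [y]
    _ = k1 * k2 * k3 * (r23 * (r13 * k2⁻¹) * k2 * r12) * k1⁻¹ * k2⁻¹ * k3⁻¹ := by group
    _ = k1 * k2 * k3 * (r23 * (k2⁻¹ * r13) * k2 * r12) * k1⁻¹ * k2⁻¹ * k3⁻¹ := by rw [← c2]
    _ = (k1 * (k2 * k3 * r23 * k2⁻¹ * k3⁻¹) * k1⁻¹) * (k1 * k3 * r13 * k1⁻¹ * k3⁻¹) *
        (k3 * (k1 * k2 * r12 * k1⁻¹ * k2⁻¹) * k3⁻¹) := by group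

end Lemmas8

set_option maxHeartbeats 3200000 in
/-- the generalized (dynamical) Yang–Baxter equation
`R̂₁₂ · (Φ₂ R̂₁₃ Φ₂⁻¹) · R̂₂₃ = (Φ₁ R̂₂₃ Φ₁⁻¹) · R̂₁₃ · (Φ₃ R̂₁₂ Φ₃⁻¹)` in `A ⊗ A ⊗ A ⊗ V`,
for `R̂` equal to either `R̂₊` or `R̂₋`. -/
theorem dynamical_yang_baxter (R : (A ⊗[ℂ] A)ˣ)
    (hR : ∀ a : A, (R : A ⊗[ℂ] A) * Bialgebra.comulAlgHom ℂ A a =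
      Algebra.TensorProduct.comm ℂ A A (Bialgebra.comulAlgHom ℂ A a) * R)
    (hR1 : deltaIdA A (R : A ⊗[ℂ] A) = a13 A (R : A ⊗[ℂ] A) * a23 A (R : A ⊗[ℂ] A))
    (hR2 : idDeltaA A (R : A ⊗[ℂ] A) = a13 A (R : A ⊗[ℂ] A) * a12 A (R : A ⊗[ℂ] A))
    (Φ : (A ⊗[ℂ] V)ˣ) :
    (uMap (j12 A V) (rrPlus A V R Φ) *
        (uMap (k2 A V) Φ * uMap (j13 A V) (rrPlus A V R Φ) * (uMap (k2 A V) Φ)⁻¹) *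
        uMap (j23 A V) (rrPlus A V R Φ) =
      (uMap (k1 A V) Φ * uMap (j23 A V) (rrPlus A V R Φ) * (uMap (k1 A V) Φ)⁻¹) *
        uMap (j13 A V) (rrPlus A V R Φ) *
        (uMap (k3 A V) Φ * uMap (j12 A V) (rrPlus A V R Φ) * (uMap (k3 A V) Φ)⁻¹)) ∧
    (uMap (j12 A V) (rrMinus A V R Φ) *
        (uMap (k2 A V) Φ * uMap (j13 A V) (rrMinus A V R Φ) * (uMap (k2 A V) Φ)⁻¹) *
        uMap (j23 A V) (rrMinus A V R Φ) =
      (uMap (k1 A V) Φ * uMap (j23 A V) (rrMinus A V R Φ) * (uMap (k1 A V) Φ)⁻¹) *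
        uMap (j13 A V) (rrMinus A V R Φ) *
        (uMap (k3 A V) Φ * uMap (j12 A V) (rrMinus A V R Φ) * (uMap (k3 A V) Φ)⁻¹)) := by
  -- double flip is the identity
  have hcc : ∀ x : A ⊗[ℂ] A,
      Algebra.TensorProduct.comm ℂ A A (Algebra.TensorProduct.comm ℂ A A x) = x := by
    intro x
    induction x using TensorProduct.induction_on with
    | zero => simp
    | tmul a b => simp [Algebra.TensorProduct.comm_tmul]
    | add x y hx hy => rw [map_add, map_add, hx, hy]
  set t : (A ⊗[ℂ] A)ˣ := uMap (Algebra.TensorProduct.comm ℂ A A).toAlgHom R with ht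
  have hRm : ∀ a : A, ((t⁻¹ : (A ⊗[ℂ] A)ˣ) : A ⊗[ℂ] A) * Bialgebra.comulAlgHom ℂ A a =
      Algebra.TensorProduct.comm ℂ A A (Bialgebra.comulAlgHom ℂ A a) * ↑t⁻¹ := by
    intro a
    have key : ((t : (A ⊗[ℂ] A)ˣ) : A ⊗[ℂ] A) *
        Algebra.TensorProduct.comm ℂ A A (Bialgebra.comulAlgHom ℂ A a)
        = Bialgebra.comulAlgHom ℂ A a * ↑t := by
      have h := congrArg (Algebra.TensorProduct.comm ℂ A A) (hR a)
      rw [map_mul, map_mul, hcc] at h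
      exact h
    rw [Units.inv_mul_eq_iff_eq_mul, ← mul_assoc, key, mul_assoc, Units.mul_inv, mul_one]
  -- the six embedded R-matrices in A ⊗ A ⊗ A ⊗ V
  set ρ12 := uMap ((embW (A := A) (V := V)).comp (a12 A)) R with hρ12
  set ρ13 := uMap ((embW (A := A) (V := V)).comp (a13 A)) R with hρ13
  set ρ23 := uMap ((embW (A := A) (V := V)).comp (a23 A)) R with hρ23
  set σ12 := uMap ((embW (A := A) (V := V)).comp (a12 A)) t⁻¹ with hσ12
  set σ13 := uMap ((embW (A := A) (V := V)).comp (a13 A)) t⁻¹ with hσ13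
  set σ23 := uMap ((embW (A := A) (V := V)).comp (a23 A)) t⁻¹ with hσ23
  set K1 := uMap (k1 A V) Φ with hK1
  set K2 := uMap (k2 A V) Φ with hK2
  set K3 := uMap (k3 A V) Φ with hK3
  -- commutation relations
  have cP3 : Commute ρ12 K3 :=
    Units.ext (comm_12_3 (R : A ⊗[ℂ] A) (Φ : A ⊗[ℂ] V)).eq
  have cP2 : Commute ρ13 K2 :=
    Units.ext (comm_13_2 (R : A ⊗[ℂ] A) (Φ : A ⊗[ℂ] V)).eq
  have cP1 : Commute ρ23 K1 :=
    Units.ext (comm_23_1 (R : A ⊗[ℂ] A) (Φ : A ⊗[ℂ] V)).eq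
  have cM3 : Commute σ12 K3 :=
    Units.ext (comm_12_3 ((t⁻¹ : (A ⊗[ℂ] A)ˣ) : A ⊗[ℂ] A) (Φ : A ⊗[ℂ] V)).eq
  have cM2 : Commute σ13 K2 :=
    Units.ext (comm_13_2 ((t⁻¹ : (A ⊗[ℂ] A)ˣ) : A ⊗[ℂ] A) (Φ : A ⊗[ℂ] V)).eq
  have cM1 : Commute σ23 K1 :=
    Units.ext (comm_23_1 ((t⁻¹ : (A ⊗[ℂ] A)ˣ) : A ⊗[ℂ] A) (Φ : A ⊗[ℂ] V)).eq
  -- Yang–Baxter in A ⊗ A ⊗ A ⊗ V, plus version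
  have ybeW : ρ12 * ρ13 * ρ23 = ρ23 * ρ13 * ρ12 := by
    have h := congrArg (uMap (embW (A := A) (V := V))) (ybe R hR hR1)
    simpa only [map_mul, uMap_comp] using h
  -- Yang–Baxter, minus version
  have ybeW' : σ12 * σ13 * σ23 = σ23 * σ13 * σ12 := by
    have hQ : uMap ((embW (A := A) (V := V)).comp (a23 A)) t *
        uMap ((embW (A := A) (V := V)).comp (a13 A)) t *
        uMap ((embW (A := A) (V := V)).comp (a12 A)) t =
        uMap ((embW (A := A) (V := V)).comp (a12 A)) t *
        uMap ((embW (A := A) (V := V)).comp (a13 A)) t *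
        uMap ((embW (A := A) (V := V)).comp (a23 A)) t := by
      have h := congrArg (uMap (embW (A := A) (V := V))) (ybe' R hR hR1)
      simp only [map_mul, uMap_comp] at h
      simpa only [ht, uMap_comp, AlgHom.comp_assoc] using h
    have h := congrArg Inv.inv hQ
    simp only [mul_inv_rev] at h
    simp only [hσ12, hσ13, hσ23, map_inv]
    simp only [mul_assoc] at h ⊢
    exact h
  -- normal forms of the braiding elements
  have hplus : rrPlus A V R Φ =
      uMap (leg13 A V) Φ * uMap (leg23 A V) Φ * uMap (leg12 A V) R *
        (uMap (leg13 A V) Φ)⁻¹ * (uMap (leg23 A V) Φ)⁻¹ := rhat_normal Φ R hR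
  have hminus : rrMinus A V R Φ =
      uMap (leg13 A V) Φ * uMap (leg23 A V) Φ * uMap (leg12 A V) t⁻¹ *
        (uMap (leg13 A V) Φ)⁻¹ * (uMap (leg23 A V) Φ)⁻¹ := rhat_normal Φ t⁻¹ hRm
  -- embedded normal forms
  have e12 : uMap (j12 A V) (rrPlus A V R Φ) = K1 * K2 * ρ12 * K1⁻¹ * K2⁻¹ := by
    rw [hplus]
    simp only [map_mul, map_inv, uMap_comp, uMap_congr (j12_leg13 (A := A) (V := V)),
      uMap_congr (j12_leg23 (A := A) (V := V)), uMap_congr (j12_leg12 (A := A) (V := V))]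
    rfl
  have e13 : uMap (j13 A V) (rrPlus A V R Φ) = K1 * K3 * ρ13 * K1⁻¹ * K3⁻¹ := by
    rw [hplus]
    simp only [map_mul, map_inv, uMap_comp, uMap_congr (j13_leg13 (A := A) (V := V)),
      uMap_congr (j13_leg23 (A := A) (V := V)), uMap_congr (j13_leg12 (A := A) (V := V))]
    rfl
  have e23 : uMap (j23 A V) (rrPlus A V R Φ) = K2 * K3 * ρ23 * K2⁻¹ * K3⁻¹ := by
    rw [hplus]
    simp only [map_mul, map_inv, uMap_comp, uMap_congr (j23_leg13 (A := A) (V := V)),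
      uMap_congr (j23_leg23 (A := A) (V := V)), uMap_congr (j23_leg12 (A := A) (V := V))]
    rfl
  have f12 : uMap (j12 A V) (rrMinus A V R Φ) = K1 * K2 * σ12 * K1⁻¹ * K2⁻¹ := by
    rw [hminus]
    simp only [map_mul, map_inv, uMap_comp, uMap_congr (j12_leg13 (A := A) (V := V)),
      uMap_congr (j12_leg23 (A := A) (V := V)), uMap_congr (j12_leg12 (A := A) (V := V))]
    rw [hσ12, map_inv]
  have f13 : uMap (j13 A V) (rrMinus A V R Φ) = K1 * K3 * σ13 * K1⁻¹ * K3⁻¹ := by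
    rw [hminus]
    simp only [map_mul, map_inv, uMap_comp, uMap_congr (j13_leg13 (A := A) (V := V)),
      uMap_congr (j13_leg23 (A := A) (V := V)), uMap_congr (j13_leg12 (A := A) (V := V))]
    rw [hσ13, map_inv]
  have f23 : uMap (j23 A V) (rrMinus A V R Φ) = K2 * K3 * σ23 * K2⁻¹ * K3⁻¹ := by
    rw [hminus]
    simp only [map_mul, map_inv, uMap_comp, uMap_congr (j23_leg13 (A := A) (V := V)),
      uMap_congr (j23_leg23 (A := A) (V := V)), uMap_congr (j23_leg12 (A := A) (V := V))]
    rw [hσ23, map_inv]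
  constructor
  · rw [e12, e13, e23]
    exact grp_gybe K1 K2 K3 ρ12 ρ13 ρ23 cP3 cP1 cP2 ybeW
  · rw [f12, f13, f23]
    exact grp_gybe K1 K2 K3 σ12 σ13 σ23 cM3 cM1 cM2 ybeW'


end Stmt4
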